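/- arXiv:1701.07018 — 2 statements merged into one kernel-verified Lean document; each statement's English description precedes it below -/
import Mathlib

section
/- Let P, H be N×N real symmetric projection matrices, and set x_{ii} = e_i and x_{ik} = e_i + e_k for 1 ≤ i < k ≤ N. Suppose that √(∑_{i≤k}(‖P x_{ik}‖₂² − ‖H x_{ik}‖₂²)²) ≤ δ. Then ‖P − H‖_F ≤ (N+1) δ, where ‖·‖_F is the Frobenius norm. -/
/-- The measurement vector: `x_{ii} = eᵢ` and `x_{ik} = eᵢ + e_k` for `i ≠ k`. -/
def xvec {N : ℕ} (i k : Fin N) : Fin N → ℝ :=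
  if i = k then (fun l => if l = i then 1 else 0)
  else fun l => (if l = i then (1 : ℝ) else 0) + (if l = k then 1 else 0)

/-- Squared Euclidean norm of a vector in `ℝ^N`. -/
def sqnorm {N : ℕ} (v : Fin N → ℝ) : ℝ := ∑ l, (v l) ^ 2

lemma quad_aux {N : ℕ} (Q : Matrix (Fin N) (Fin N) ℝ) (hs : Q.IsSymm) (h2 : Q * Q = Q)
    (v : Fin N → ℝ) : sqnorm (Q.mulVec v) = ∑ a, ∑ b, v a * Q a b * v b := by
  have hsym : ∀ a b, Q a b = Q b a := fun a b => (congrFun (congrFun hs a) b).symm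
  have hQ : ∀ a b, Q a b = ∑ l, Q l a * Q l b := by
    intro a b
    conv_lhs => rw [← h2]
    rw [Matrix.mul_apply]
    exact Finset.sum_congr rfl fun l _ => by rw [hsym a l]
  simp only [sqnorm, Matrix.mulVec, dotProduct]
  calc ∑ l, (∑ a, Q l a * v a) ^ 2
      = ∑ l, ∑ a, ∑ b, v a * (Q l a * Q l b) * v b := by
        refine Finset.sum_congr rfl fun l _ => ?_
        rw [sq, Finset.sum_mul_sum]
        exact Finset.sum_congr rfl fun a _ => Finset.sum_congr rfl fun b _ => by ring
    _ = ∑ a, ∑ b, v a * Q a b * v b := by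
        rw [Finset.sum_comm]
        refine Finset.sum_congr rfl fun a _ => ?_
        rw [Finset.sum_comm]
        refine Finset.sum_congr rfl fun b _ => ?_
        rw [hQ a b, Finset.mul_sum, Finset.sum_mul]

lemma quad_diag {N : ℕ} (Q : Matrix (Fin N) (Fin N) ℝ) (i : Fin N) :
    (∑ a, ∑ b, xvec i i a * Q a b * xvec i i b) = Q i i := by
  simp [xvec, ite_mul, mul_ite, Finset.sum_ite_eq]

lemma quad_off {N : ℕ} (Q : Matrix (Fin N) (Fin N) ℝ) (i k : Fin N) (h : i ≠ k) :
    (∑ a, ∑ b, xvec i k a * Q a b * xvec i k b) = Q i i + Q k k + Q i k + Q k i := by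
  simp [xvec, h, ite_mul, mul_ite, add_mul, mul_add, Finset.sum_add_distrib, Finset.sum_ite_eq]
  ring

lemma aux3 (a b c : ℝ) : c ^ 2 ≤ 3/4 * ((a + b + 2 * c) ^ 2 + a ^ 2 + b ^ 2) := by
  nlinarith [sq_nonneg (2*a+b+2*c), sq_nonneg (a+2*b+2*c), sq_nonneg (a-b)]

/-- if the measurements `‖P x_{ik}‖₂²` of two symmetric projection
matrices differ in squared sum by at most `δ²` over all `i ≤ k`, then
`‖P − H‖_F ≤ (N+1) δ`. -/
theorem stmt16 (N : ℕ) (P H : Matrix (Fin N) (Fin N) ℝ)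
    (hPsym : P.IsSymm) (hHsym : H.IsSymm) (hP2 : P * P = P) (hH2 : H * H = H)
    (δ : ℝ)
    (hmeas : Real.sqrt (∑ i : Fin N, ∑ k : Fin N,
        if i ≤ k then
          (sqnorm (P.mulVec (xvec i k)) - sqnorm (H.mulVec (xvec i k))) ^ 2
        else 0) ≤ δ) :
    Real.sqrt (∑ i : Fin N, ∑ j : Fin N, (P i j - H i j) ^ 2)
      ≤ ((N : ℝ) + 1) * δ := by
  have hδ : 0 ≤ δ := le_trans (Real.sqrt_nonneg _) hmeas
  set d : Fin N → Fin N → ℝ := fun i k =>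
    sqnorm (P.mulVec (xvec i k)) - sqnorm (H.mulVec (xvec i k)) with hd
  set E : Fin N → Fin N → ℝ := fun i j => P i j - H i j with hE
  have hEsym : ∀ i j, E i j = E j i := by
    intro i j
    simp only [hE]
    rw [← (congrFun (congrFun hPsym i) j), ← (congrFun (congrFun hHsym i) j)]
    rfl
  have hdd : ∀ i, d i i = E i i := by
    intro i
    simp only [hd, hE, quad_aux P hPsym hP2, quad_aux H hHsym hH2, quad_diag]
  have hdo : ∀ i k, i ≠ k → d i k = E i i + E k k + 2 * E i k := by
    intro i k h
    simp only [hd, hE, quad_aux P hPsym hP2, quad_aux H hHsym hH2, quad_off P _ _ h,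
      quad_off H _ _ h]
    have := hEsym i k
    simp only [hE] at this
    linarith [congrFun (congrFun hPsym i) k, congrFun (congrFun hHsym i) k]
  have hdsym : ∀ i k, d i k = d k i := by
    intro i k
    rcases eq_or_ne i k with h | h
    · rw [h]
    · rw [hdo i k h, hdo k i (Ne.symm h), hEsym i k]; ring
  set T : ℝ := ∑ i : Fin N, ∑ k : Fin N, if i ≤ k then d i k ^ 2 else 0 with hT
  have hTnonneg : 0 ≤ T := by
    apply Finset.sum_nonneg; intro i _
    apply Finset.sum_nonneg; intro k _
    split_ifs <;> positivity
  have hTδ : T ≤ δ ^ 2 := by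
    nlinarith [Real.sq_sqrt hTnonneg, Real.sqrt_nonneg T, hmeas]
  set S : ℝ := ∑ i : Fin N, ∑ j : Fin N, E i j ^ 2 with hS
  -- L2 : diagonal sum bounded by T
  have L2 : ∑ i : Fin N, d i i ^ 2 ≤ T := by
    have key : ∀ i : Fin N, d i i ^ 2 = ∑ j : Fin N, if i = j then d i j ^ 2 else 0 := by
      intro i
      rw [Finset.sum_ite_eq Finset.univ i (fun j => d i j ^ 2)]
      simp
    rw [Finset.sum_congr rfl (fun i _ => key i)]
    refine Finset.sum_le_sum fun i _ => Finset.sum_le_sum fun j _ => ?_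
    split_ifs with h1 h2 h2
    · exact le_refl _
    · exact absurd (le_of_eq h1) h2
    · positivity
    · exact le_refl _
  -- L1 : full sum of d² bounded by 2T
  have L1 : ∑ i : Fin N, ∑ j : Fin N, d i j ^ 2 ≤ 2 * T := by
    have split : ∑ i : Fin N, ∑ j : Fin N, d i j ^ 2 =
        T + ∑ i : Fin N, ∑ j : Fin N, (if i ≤ j then 0 else d i j ^ 2) := by
      rw [hT, ← Finset.sum_add_distrib]
      refine Finset.sum_congr rfl fun i _ => ?_
      rw [← Finset.sum_add_distrib]
      refine Finset.sum_congr rfl fun j _ => ?_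
      split_ifs <;> ring
    have upper : ∑ i : Fin N, ∑ j : Fin N, (if i ≤ j then 0 else d i j ^ 2) ≤ T := by
      rw [Finset.sum_comm]
      refine Finset.sum_le_sum fun i _ => Finset.sum_le_sum fun j _ => ?_
      rw [hdsym]
      split_ifs with h1 h2 h2
      · positivity
      · exact le_refl _
      · exact le_refl _
      · exact absurd (le_of_not_ge h1) h2
    linarith
  -- L3 : termwise bound
  have L3 : ∀ i j : Fin N, E i j ^ 2 ≤ (3/4) * (d i j ^ 2 + d i i ^ 2 + d j j ^ 2) := by
    intro i j
    rcases eq_or_ne i j with h | h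
    · subst h
      rw [hdd]
      nlinarith [sq_nonneg (E i i)]
    · rw [hdo i j h, hdd, hdd]
      exact aux3 (E i i) (E j j) (E i j)
  -- combine
  have hstep : S ≤ (3/4) * ((∑ i : Fin N, ∑ j : Fin N, d i j ^ 2)
      + (N : ℝ) * (∑ i : Fin N, d i i ^ 2) + (N : ℝ) * (∑ j : Fin N, d j j ^ 2)) := by
    have h1 : ∑ _i : Fin N, ∑ j : Fin N, d j j ^ 2 = (N : ℝ) * ∑ j : Fin N, d j j ^ 2 := by
      rw [Finset.sum_const, Finset.card_univ, Fintype.card_fin, nsmul_eq_mul]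
    have h2 : ∑ i : Fin N, ∑ _j : Fin N, d i i ^ 2 = (N : ℝ) * ∑ i : Fin N, d i i ^ 2 := by
      rw [Finset.sum_comm, h1]
    calc S ≤ ∑ i : Fin N, ∑ j : Fin N, (3/4) * (d i j ^ 2 + d i i ^ 2 + d j j ^ 2) :=
          Finset.sum_le_sum fun i _ => Finset.sum_le_sum fun j _ => L3 i j
      _ = (3/4) * ((∑ i : Fin N, ∑ j : Fin N, d i j ^ 2)
          + (∑ i : Fin N, ∑ _j : Fin N, d i i ^ 2) + (∑ _i : Fin N, ∑ j : Fin N, d j j ^ 2)) := by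
          simp only [← Finset.mul_sum]
          congr 1
          simp [Finset.sum_add_distrib]
      _ = _ := by rw [h1, h2]
  have hSnonneg : 0 ≤ S := Finset.sum_nonneg fun i _ => Finset.sum_nonneg fun j _ => sq_nonneg _
  have hNd : (N : ℝ) * (∑ i : Fin N, d i i ^ 2) ≤ (N : ℝ) * T :=
    mul_le_mul_of_nonneg_left L2 (Nat.cast_nonneg N)
  have hSbound : S ≤ (3/2) * ((N : ℝ) + 1) * T := by nlinarith
  have hfinal : S ≤ (((N : ℝ) + 1) * δ) ^ 2 := by
    rcases Nat.eq_zero_or_pos N with h0 | hpos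
    · subst h0
      have : S = 0 := by simp [hS]
      rw [this]; positivity
    · have hN1 : (1 : ℝ) ≤ (N : ℝ) := by exact_mod_cast hpos
      have c1 : (3/2) * ((N : ℝ) + 1) ≤ ((N : ℝ) + 1) ^ 2 := by nlinarith
      have c2 : (3/2) * ((N : ℝ) + 1) * T ≤ ((N : ℝ) + 1) ^ 2 * T :=
        mul_le_mul_of_nonneg_right c1 hTnonneg
      have c3 : ((N : ℝ) + 1) ^ 2 * T ≤ ((N : ℝ) + 1) ^ 2 * δ ^ 2 :=
        mul_le_mul_of_nonneg_left hTδ (by positivity)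
      have c4 : (((N : ℝ) + 1) * δ) ^ 2 = ((N : ℝ) + 1) ^ 2 * δ ^ 2 := by ring
      rw [c4]
      linarith
  calc Real.sqrt S ≤ Real.sqrt ((((N : ℝ) + 1) * δ) ^ 2) := Real.sqrt_le_sqrt hfinal
    _ = ((N : ℝ) + 1) * δ := Real.sqrt_sq (by positivity)
end

section
/- Let f(x) = g(‖Px‖₂²) with P an orthogonal projection onto an (N−d)-dimensional subspace of ℝ^N, g ∈ C¹ with g′(t) ≠ 0 for t in the relevant range, and let T^{N−1} be the hyperplane orthogonal to ∇f(x₀) for some x₀ with Px₀ ≠ 0. Then the restriction of f to T^{N−1} is again a linear-sleeve function: there exists an orthogonal projection P′ : T^{N−1} → T^{N−1} onto an (N−1−d)-dimensional subspace of T^{N−1} such that f(y) = g(‖P′ y‖₂²) for all y ∈ T^{N−1}. Concretely, with u_N = ∇f(x₀)/‖∇f(x₀)‖₂ ∈ range(P), P′ = P − u_N u_Nᵀ restricted to T^{N−1}. -/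
/-! Since `u = P x₀` lies in `K = range P` and `P` is self-adjoint, every `y ⊥ u` has `P y ⊥ u`,
so `P y` already lies in `K' = K ⊓ uᗮ ≤ K`; hence projecting onto `K'` gives `P y` as well. -/

open scoped InnerProductSpace

namespace Submodule

variable {𝕜 E : Type*} [RCLike 𝕜] [NormedAddCommGroup E] [InnerProductSpace 𝕜 E]

theorem starProjection_eq_of_le_of_starProjection_mem {U V : Submodule 𝕜 E}
    [U.HasOrthogonalProjection] [V.HasOrthogonalProjection] (h : U ≤ V) {x : E}
    (hx : V.starProjection x ∈ U) : U.starProjection x = V.starProjection x := by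
  rw [← starProjection_comp_starProjection_of_le h, ContinuousLinearMap.comp_apply,
    starProjection_eq_self_iff.mpr hx]

theorem starProjection_mem_orthogonal_singleton {K : Submodule 𝕜 E} [K.HasOrthogonalProjection]
    {u y : E} (hu : u ∈ K) (hy : ⟪y, u⟫_𝕜 = 0) : K.starProjection y ∈ (𝕜 ∙ u)ᗮ := by
  rw [mem_orthogonal_singleton_iff_inner_right, ← inner_starProjection_left_eq_right,
    starProjection_eq_self_iff.mpr hu, inner_eq_zero_symm, hy]

theorem starProjection_inf_orthogonal_singleton {K : Submodule 𝕜 E} [FiniteDimensional 𝕜 K]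
    {u y : E} (hu : u ∈ K) (hy : ⟪y, u⟫_𝕜 = 0) :
    (K ⊓ (𝕜 ∙ u)ᗮ).starProjection y = K.starProjection y :=
  starProjection_eq_of_le_of_starProjection_mem inf_le_left
    ⟨K.starProjection_apply_mem y, starProjection_mem_orthogonal_singleton hu hy⟩

theorem finrank_inf_orthogonal_singleton {K : Submodule 𝕜 E} [FiniteDimensional 𝕜 K]
    {u : E} (hu : u ∈ K) (hu₀ : u ≠ 0) :
    Module.finrank 𝕜 (K ⊓ (𝕜 ∙ u)ᗮ : Submodule 𝕜 E) = Module.finrank 𝕜 K - 1 := by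
  have hspan : 𝕜 ∙ u ≤ K := (span_singleton_le_iff_mem u K).mpr hu
  have hdim := finrank_add_inf_finrank_orthogonal hspan
  rw [finrank_span_singleton hu₀] at hdim
  rw [inf_comm]
  omega

end Submodule

open scoped RealInnerProductSpace

theorem stmt17_general (N d : ℕ) (K : Submodule ℝ (EuclideanSpace ℝ (Fin N)))
    (hK : Module.finrank ℝ K = N - d)
    (g : ℝ → ℝ)
    (x₀ : EuclideanSpace ℝ (Fin N))
    (hx₀ : (Submodule.orthogonalProjection K x₀ : EuclideanSpace ℝ (Fin N)) ≠ 0) :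
    Module.finrank ℝ
        (K ⊓ (Submodule.span ℝ
          {(Submodule.orthogonalProjection K x₀ : EuclideanSpace ℝ (Fin N))})ᗮ :
          Submodule ℝ (EuclideanSpace ℝ (Fin N))) = N - d - 1 ∧
      ∀ y : EuclideanSpace ℝ (Fin N),
        ⟪y, (Submodule.orthogonalProjection K x₀ : EuclideanSpace ℝ (Fin N))⟫ = 0 →
        g (‖(Submodule.orthogonalProjection K y : EuclideanSpace ℝ (Fin N))‖ ^ 2)
          = g (‖(Submodule.orthogonalProjection
                (K ⊓ (Submodule.span ℝ
                  {(Submodule.orthogonalProjection K x₀ : EuclideanSpace ℝ (Fin N))})ᗮ) y :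
              EuclideanSpace ℝ (Fin N))‖ ^ 2) := by
  have hu : (K.orthogonalProjection x₀ : EuclideanSpace ℝ (Fin N)) ∈ K :=
    K.starProjection_apply_mem x₀
  refine ⟨by rw [Submodule.finrank_inf_orthogonal_singleton hu hx₀, hK], fun y hy => ?_⟩
  exact congrArg (fun v => g (‖v‖ ^ 2))
    (Submodule.starProjection_inf_orthogonal_singleton hu hy).symm

/-- the restriction of a linear-sleeve function
`f(x) = g(‖Px‖₂²)` to the hyperplane orthogonal to `∇f(x₀)` is again a
linear-sleeve function: with `u_N = Px₀/‖Px₀‖ ∈ K = range P` and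
`K' = K ∩ (ℝ u_N)^⊥` (of dimension `N − d − 1`), one has
`f(y) = g(‖P' y‖₂²)` for all `y ⊥ u_N`, where `P'` projects onto `K'`. -/
theorem stmt17 (N d : ℕ) (K : Submodule ℝ (EuclideanSpace ℝ (Fin N)))
    (hK : Module.finrank ℝ K = N - d) (hdN : d < N)
    (g g' : ℝ → ℝ) (hderiv : ∀ t, HasDerivAt g (g' t) t)
    (x₀ : EuclideanSpace ℝ (Fin N))
    (hx₀ : (Submodule.orthogonalProjection K x₀ : EuclideanSpace ℝ (Fin N)) ≠ 0)
    (hg' : g' (‖(Submodule.orthogonalProjection K x₀ : EuclideanSpace ℝ (Fin N))‖ ^ 2) ≠ 0) :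
    Module.finrank ℝ
        (K ⊓ (Submodule.span ℝ
          {(Submodule.orthogonalProjection K x₀ : EuclideanSpace ℝ (Fin N))})ᗮ :
          Submodule ℝ (EuclideanSpace ℝ (Fin N))) = N - d - 1 ∧
      ∀ y : EuclideanSpace ℝ (Fin N),
        ⟪y, (Submodule.orthogonalProjection K x₀ : EuclideanSpace ℝ (Fin N))⟫ = 0 →
        g (‖(Submodule.orthogonalProjection K y : EuclideanSpace ℝ (Fin N))‖ ^ 2)
          = g (‖(Submodule.orthogonalProjection
                (K ⊓ (Submodule.span ℝ
                  {(Submodule.orthogonalProjection K x₀ : EuclideanSpace ℝ (Fin N))})ᗮ) y :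
              EuclideanSpace ℝ (Fin N))‖ ^ 2) :=
  stmt17_general N d K hK g x₀ hx₀
end
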